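/- Let 𝒬 be a family of quotient maps of the Riemann sphere. Suppose that for every point w₀ and every disk U containing w₀ there exist a constant δ(w₀) > 0 and a disk V ∋ w₀ with cl(V) ⊂ U such that for all q ∈ 𝒬 the spherical distance dist_s(q⁻¹(∂U), q⁻¹(V)) > δ(w₀). Then 𝒬 is equicontinuous. -/

import Mathlib

/-!
Cover the sphere by disks `U w₀` of chordal diameter `< ε`. The hypothesis gives disks
`V w₀` with `cl (V w₀) ⊆ U w₀` and separations `δ w₀`; by compactness finitely many `V w₀`
cover the sphere, so a single `δ₀ > 0` works for every point. Two points `z, w` at chordal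
distance `η` are joined by a preconnected set of chordal size `≤ 8 η` around `z`: a segment in
the affine chart, or in the chart at `∞`, obtained through the isometric inversion `z ↦ 1 / z`.
If `q z ∈ V w₀` but `q w ∉ U w₀`, the image of this set under `q` meets `∂ (U w₀)` at some `q x`,
and `x` lies within `8 η < δ₀` of `z ∈ q⁻¹ (V w₀)`, contradicting the separation.
-/

noncomputable section

open Set OnePoint Filter

/-- The finite part of a point of the Riemann sphere (junk value `0` at `∞`). -/
def finPart (w : OnePoint ℂ) : ℂ := by
  classical exact if h : ∃ z : ℂ, w = (z : OnePoint ℂ) then h.choose else 0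

/-- The chordal (spherical) distance on the Riemann sphere `ℂ̂ = OnePoint ℂ`. -/
def chordal (w v : OnePoint ℂ) : ℝ := by
  classical exact
    if w = ∞ then (if v = ∞ then 0 else 2 / Real.sqrt (1 + ‖finPart v‖ ^ 2))
    else if v = ∞ then 2 / Real.sqrt (1 + ‖finPart w‖ ^ 2)
    else 2 * ‖finPart w - finPart v‖ /
      (Real.sqrt (1 + ‖finPart w‖ ^ 2) * Real.sqrt (1 + ‖finPart v‖ ^ 2))

/-- Inversion `z ↦ 1/z` on the Riemann sphere, interchanging `0` and `∞`. -/
def opInv (w : OnePoint ℂ) : OnePoint ℂ := by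
  classical exact
    if w = ∞ then ((0 : ℂ) : OnePoint ℂ)
    else if finPart w = 0 then ∞ else (((finPart w)⁻¹ : ℂ) : OnePoint ℂ)


/-- A full continuum on the sphere: a compact connected set with connected complement. -/
def IsFullContinuum (K : Set (OnePoint ℂ)) : Prop :=
  IsCompact K ∧ IsConnected K ∧ IsPreconnected Kᶜ

/-- A quotient map of the sphere: a continuous surjection all of whose fibers are
single points or full continua. -/
def IsSphQuotientMap (q : OnePoint ℂ → OnePoint ℂ) : Prop :=
  Continuous q ∧ Function.Surjective q ∧
    ∀ w, (∃ z, q ⁻¹' {w} = {z}) ∨ IsFullContinuum (q ⁻¹' {w})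

/-- A Jordan curve on the sphere: a homeomorphic image of the circle. -/
def IsJordanCurve (C : Set (OnePoint ℂ)) : Prop :=
  ∃ f : ℂ → OnePoint ℂ, ContinuousOn f (Metric.sphere (0:ℂ) 1) ∧
    Set.InjOn f (Metric.sphere (0:ℂ) 1) ∧ f '' Metric.sphere (0:ℂ) 1 = C

/-- A disk: a Jordan domain on the sphere. -/
def IsDisk (U : Set (OnePoint ℂ)) : Prop :=
  IsOpen U ∧ IsConnected U ∧ IsJordanCurve (frontier U)

open Topology Bornology

@[simp] lemma finPart_coe (a : ℂ) : finPart a = a := by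
  have h : ∃ z : ℂ, (a : OnePoint ℂ) = z := ⟨a, rfl⟩
  rw [finPart, dif_pos h]
  exact (OnePoint.coe_injective h.choose_spec).symm

@[simp] lemma chordal_coe_coe (a b : ℂ) :
    chordal a b = 2 * ‖a - b‖ / (√(1 + ‖a‖ ^ 2) * √(1 + ‖b‖ ^ 2)) := by
  simp [chordal]

@[simp] lemma chordal_coe_infty (a : ℂ) : chordal a ∞ = 2 / √(1 + ‖a‖ ^ 2) := by
  simp [chordal]

@[simp] lemma chordal_infty_coe (a : ℂ) : chordal ∞ a = 2 / √(1 + ‖a‖ ^ 2) := by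
  simp [chordal]

@[simp] lemma chordal_infty_infty : chordal ∞ ∞ = 0 := by
  simp [chordal]

lemma chordal_comm (z w : OnePoint ℂ) : chordal z w = chordal w z := by
  induction z using OnePoint.rec <;> induction w using OnePoint.rec <;>
    simp [norm_sub_rev, mul_comm]

lemma chordal_coe_le (a b : ℂ) : chordal a b ≤ 2 * ‖a - b‖ := by
  rw [chordal_coe_coe]
  refine div_le_self (by positivity) (one_le_mul_of_one_le_of_one_le ?_ ?_) <;>
    exact Real.one_le_sqrt.2 (by simp)

lemma exists_eq_coe_norm_sub_le {a : ℂ} (ha : ‖a‖ ≤ 1) {w : OnePoint ℂ}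
    (hw : chordal a w < 1 / 2) : ∃ b : ℂ, w = b ∧ ‖a - b‖ ≤ 4 * chordal a w := by
  have hA : √(1 + ‖a‖ ^ 2) ≤ 2 := Real.sqrt_le_iff.2 ⟨by norm_num, by nlinarith [norm_nonneg a]⟩
  induction w using OnePoint.rec with
  | infty =>
    rw [chordal_coe_infty, div_lt_iff₀ (by positivity)] at hw
    linarith
  | coe b =>
    refine ⟨b, rfl, ?_⟩
    -- with `t = ‖a - b‖` one gets `chordal a b ≥ t / (2 + t)`, and `chordal a b < 1 / 2` then
    -- forces `t ≤ 4 * chordal a b`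
    have hB : √(1 + ‖b‖ ^ 2) ≤ 2 + ‖a - b‖ := by
      refine Real.sqrt_le_iff.2 ⟨by positivity, ?_⟩
      nlinarith [norm_sub_norm_le b a, norm_sub_rev a b, norm_nonneg b]
    have hc : 2 * ‖a - b‖ ≤ chordal a b * (2 * (2 + ‖a - b‖)) := by
      rw [chordal_coe_coe, div_mul_eq_mul_div, le_div_iff₀ (by positivity)]
      have := mul_le_mul hA hB (Real.sqrt_nonneg _) (by norm_num)
      nlinarith [norm_nonneg (a - b), Real.sqrt_nonneg (1 + ‖a‖ ^ 2),
        Real.sqrt_nonneg (1 + ‖b‖ ^ 2)]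
    nlinarith [norm_nonneg (a - b)]

@[simp] lemma opInv_infty : opInv ∞ = ((0 : ℂ) : OnePoint ℂ) := by
  simp [opInv]

@[simp] lemma opInv_coe_zero : opInv ((0 : ℂ) : OnePoint ℂ) = ∞ := by
  simp [opInv]

lemma opInv_coe {a : ℂ} (ha : a ≠ 0) : opInv a = ((a⁻¹ : ℂ) : OnePoint ℂ) := by
  simp [opInv, ha]

lemma opInv_involutive : Function.Involutive opInv := by
  intro z
  induction z using OnePoint.rec with
  | infty => simp
  | coe a =>
    rcases eq_or_ne a 0 with rfl | ha
    · simp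
    · rw [opInv_coe ha, opInv_coe (inv_ne_zero ha), inv_inv]

lemma sqrt_one_add_norm_inv_sq {a : ℂ} (ha : a ≠ 0) :
    √(1 + ‖a⁻¹‖ ^ 2) = √(1 + ‖a‖ ^ 2) / ‖a‖ := by
  have ha' : 0 < ‖a‖ := norm_pos_iff.2 ha
  rw [norm_inv, Real.sqrt_eq_iff_mul_self_eq (by positivity) (by positivity), div_mul_div_comm,
    Real.mul_self_sqrt (by positivity)]
  field_simp
  ring

lemma chordal_opInv_coe_coe (a b : ℂ) : chordal (opInv a) (opInv b) = chordal a b := by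
  rcases eq_or_ne a 0 with rfl | ha <;> rcases eq_or_ne b 0 with rfl | hb
  · simp
  · rw [opInv_coe_zero, opInv_coe hb, chordal_infty_coe, chordal_coe_coe,
      sqrt_one_add_norm_inv_sq hb]
    have : 0 < ‖b‖ := norm_pos_iff.2 hb
    simp only [zero_sub, norm_neg, norm_zero, ne_eq, two_ne_zero, not_false_eq_true, zero_pow,
      add_zero, Real.sqrt_one, one_mul]
    field_simp
  · rw [opInv_coe_zero, opInv_coe ha, chordal_coe_infty, chordal_coe_coe,
      sqrt_one_add_norm_inv_sq ha]
    have : 0 < ‖a‖ := norm_pos_iff.2 ha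
    simp only [sub_zero, norm_zero, ne_eq, two_ne_zero, not_false_eq_true, zero_pow, add_zero,
      Real.sqrt_one, mul_one]
    field_simp
  · rw [opInv_coe ha, opInv_coe hb, chordal_coe_coe, chordal_coe_coe,
      sqrt_one_add_norm_inv_sq ha, sqrt_one_add_norm_inv_sq hb,
      show a⁻¹ - b⁻¹ = (b - a) / (a * b) by field_simp, norm_div, norm_mul, norm_sub_rev]
    have : 0 < ‖a‖ := norm_pos_iff.2 ha
    have : 0 < ‖b‖ := norm_pos_iff.2 hb
    field_simp

lemma chordal_opInv (z w : OnePoint ℂ) : chordal (opInv z) (opInv w) = chordal z w := by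
  have h_infty : ∀ w : OnePoint ℂ, chordal (opInv ∞) (opInv w) = chordal ∞ w := by
    suffices ∀ w : OnePoint ℂ, chordal ((0 : ℂ) : OnePoint ℂ) w = chordal ∞ (opInv w) by
      intro w; rw [opInv_infty, this, opInv_involutive]
    intro w
    induction w using OnePoint.rec with
    | infty => simp
    | coe c => rw [← chordal_opInv_coe_coe, opInv_coe_zero]
  induction z using OnePoint.rec with
  | infty => exact h_infty w
  | coe a =>
    induction w using OnePoint.rec with
    | infty => rw [chordal_comm, h_infty, chordal_comm]
    | coe b => exact chordal_opInv_coe_coe a b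

lemma tendsto_opInv_coe_cobounded :
    Tendsto (fun a : ℂ ↦ opInv a) (cobounded ℂ) (𝓝 ((0 : ℂ) : OnePoint ℂ)) := by
  have hne : ∀ᶠ a : ℂ in cobounded ℂ, a ≠ 0 :=
    (Metric.cobounded_eq_cocompact (α := ℂ)).symm ▸ isCompact_singleton.compl_mem_cocompact
  refine ((OnePoint.continuous_coe.tendsto 0).comp tendsto_inv₀_cobounded).congr' ?_
  filter_upwards [hne] with a ha using (opInv_coe ha).symm

lemma continuous_opInv_coe : Continuous fun a : ℂ ↦ opInv a := by
  refine continuous_iff_continuousAt.2 fun a ↦ ?_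
  rcases eq_or_ne a 0 with rfl | ha
  · rw [ContinuousAt, opInv_coe_zero, ← nhdsNE_sup_pure (0 : ℂ), tendsto_sup]
    refine ⟨?_, by simpa using tendsto_pure_nhds (fun a : ℂ ↦ opInv a) 0⟩
    have hinfty := OnePoint.tendsto_coe_infty (X := ℂ)
    rw [coclosedCompact_eq_cocompact, ← Metric.cobounded_eq_cocompact] at hinfty
    refine (hinfty.comp tendsto_inv₀_nhdsNE_zero).congr' ?_
    filter_upwards [self_mem_nhdsWithin] with b hb using (opInv_coe hb).symm
  · have : (fun b : ℂ ↦ ((b⁻¹ : ℂ) : OnePoint ℂ)) =ᶠ[𝓝 a] fun b ↦ opInv b := by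
      filter_upwards [isOpen_ne.mem_nhds ha] with b hb using (opInv_coe hb).symm
    exact ((OnePoint.continuous_coe.continuousAt).comp (continuousAt_inv₀ ha)).congr this

lemma continuous_opInv : Continuous opInv := by
  refine (OnePoint.continuous_iff opInv).2 ⟨?_, continuous_opInv_coe⟩
  rw [opInv_infty, coclosedCompact_eq_cocompact, ← Metric.cobounded_eq_cocompact]
  exact tendsto_opInv_coe_cobounded

def opInvHomeomorph : OnePoint ℂ ≃ₜ OnePoint ℂ where
  toEquiv := opInv_involutive.toPerm
  continuous_toFun := continuous_opInv
  continuous_invFun := continuous_opInv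

lemma isJordanCurve_image_coe_sphere (z₀ : ℂ) {r : ℝ} (hr : 0 < r) :
    IsJordanCurve (((↑) : ℂ → OnePoint ℂ) '' Metric.sphere z₀ r) := by
  have hr' : (r : ℂ) ≠ 0 := by exact_mod_cast hr.ne'
  refine ⟨fun u ↦ ((z₀ + r * u : ℂ) : OnePoint ℂ),
    (OnePoint.continuous_coe.comp (by fun_prop)).continuousOn, ?_, ?_⟩
  · intro u _ v _ huv
    exact mul_left_cancel₀ hr' (add_left_cancel (OnePoint.coe_injective huv))
  · rw [show (fun u : ℂ ↦ ((z₀ + r * u : ℂ) : OnePoint ℂ)) = (↑) ∘ fun u ↦ z₀ + r * u from rfl,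
      image_comp]
    congr 1
    ext w
    simp only [mem_image, mem_sphere_iff_norm, sub_zero]
    constructor
    · rintro ⟨u, hu, rfl⟩
      simp [hu, abs_of_pos hr]
    · intro hw
      refine ⟨(w - z₀) / r, ?_, by field_simp; ring⟩
      rw [norm_div, hw, Complex.norm_real, Real.norm_eq_abs, abs_of_pos hr, div_self hr.ne']

lemma frontier_image_coe_ball (z₀ : ℂ) {r : ℝ} (hr : 0 < r) :
    frontier (((↑) : ℂ → OnePoint ℂ) '' Metric.ball z₀ r) =
      ((↑) : ℂ → OnePoint ℂ) '' Metric.sphere z₀ r := by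
  have hcl : closure (((↑) : ℂ → OnePoint ℂ) '' Metric.ball z₀ r) =
      ((↑) : ℂ → OnePoint ℂ) '' Metric.closedBall z₀ r := by
    refine Subset.antisymm ?_ ?_
    · exact closure_minimal (image_mono Metric.ball_subset_closedBall)
        (isClosed_image_coe.2 ⟨Metric.isClosed_closedBall, isCompact_closedBall z₀ r⟩)
    · rw [← closure_ball z₀ hr.ne']
      exact image_closure_subset_closure_image OnePoint.continuous_coe
  rw [frontier, hcl, (isOpen_image_coe.2 Metric.isOpen_ball).interior_eq,
    ← image_sdiff OnePoint.coe_injective, Metric.closedBall_sdiff_ball]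

lemma isDisk_image_coe_ball (z₀ : ℂ) {r : ℝ} (hr : 0 < r) :
    IsDisk (((↑) : ℂ → OnePoint ℂ) '' Metric.ball z₀ r) := by
  refine ⟨isOpen_image_coe.2 Metric.isOpen_ball, ?_, ?_⟩
  · exact ((convex_ball z₀ r).isConnected (Metric.nonempty_ball.2 hr)).image _
      OnePoint.continuous_coe.continuousOn
  · rw [frontier_image_coe_ball z₀ hr]
    exact isJordanCurve_image_coe_sphere z₀ hr

lemma IsDisk.image_homeomorph {U : Set (OnePoint ℂ)} (hU : IsDisk U)
    (e : OnePoint ℂ ≃ₜ OnePoint ℂ) : IsDisk (e '' U) := by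
  obtain ⟨hopen, hconn, f, hf, hinj, hfU⟩ := hU
  refine ⟨e.isOpenMap U hopen, hconn.image e e.continuous.continuousOn, e ∘ f,
    e.continuous.comp_continuousOn hf, e.injective.comp_injOn hinj, ?_⟩
  rw [← e.image_frontier, image_comp, hfU]

lemma chordal_lt_of_mem_image_coe_ball {z₀ : ℂ} {ε : ℝ} {x y : OnePoint ℂ}
    (hx : x ∈ ((↑) : ℂ → OnePoint ℂ) '' Metric.ball z₀ (ε / 4))
    (hy : y ∈ ((↑) : ℂ → OnePoint ℂ) '' Metric.ball z₀ (ε / 4)) : chordal x y < ε := by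
  obtain ⟨a, ha, rfl⟩ := hx
  obtain ⟨b, hb, rfl⟩ := hy
  have hab : ‖a - b‖ < ε / 4 + ε / 4 := by
    rw [← dist_eq_norm]
    exact (dist_triangle_right a b z₀).trans_lt (add_lt_add ha hb)
  linarith [chordal_coe_le a b]

lemma exists_isDisk_chordal_lt (w₀ : OnePoint ℂ) {ε : ℝ} (hε : 0 < ε) :
    ∃ U, IsDisk U ∧ w₀ ∈ U ∧ ∀ x ∈ U, ∀ y ∈ U, chordal x y < ε := by
  have hball := isDisk_image_coe_ball (0 : ℂ) (show 0 < ε / 4 by positivity)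
  induction w₀ using OnePoint.rec with
  | infty =>
    refine ⟨opInvHomeomorph '' _, hball.image_homeomorph opInvHomeomorph,
      ⟨(0 : ℂ), ⟨0, Metric.mem_ball_self (by positivity), rfl⟩, opInv_coe_zero⟩, ?_⟩
    rintro _ ⟨x, hx, rfl⟩ _ ⟨y, hy, rfl⟩
    exact (chordal_opInv x y).trans_lt (chordal_lt_of_mem_image_coe_ball hx hy)
  | coe z₀ =>
    exact ⟨_, isDisk_image_coe_ball z₀ (show 0 < ε / 4 by positivity),
      ⟨z₀, Metric.mem_ball_self (by positivity), rfl⟩,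
      fun x hx y hy ↦ chordal_lt_of_mem_image_coe_ball hx hy⟩

lemma IsPreconnected.inter_frontier_nonempty {X : Type*} [TopologicalSpace X] {s U : Set X}
    (hs : IsPreconnected s) (hin : (s ∩ U).Nonempty) (hout : (s \ U).Nonempty) :
    (s ∩ frontier U).Nonempty := by
  by_contra hempty
  have hsub : s ⊆ interior U ∪ (closure U)ᶜ := by
    intro x hx
    by_cases hxU : x ∈ closure U
    · refine Or.inl (by_contra fun hxi ↦ hempty ⟨x, hx, hxU, hxi⟩)
    · exact Or.inr hxU
  rcases hs.subset_or_subset isOpen_interior isClosed_closure.isOpen_compl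
      (disjoint_compl_right.mono_left interior_subset_closure) hsub with h | h
  · obtain ⟨x, hxs, hxU⟩ := hout
    exact hxU (interior_subset (h hxs))
  · obtain ⟨x, hxs, hxU⟩ := hin
    exact h hxs (subset_closure hxU)

lemma exists_isPreconnected_chordal_le_of_norm_le_one {a : ℂ} (ha : ‖a‖ ≤ 1) {w : OnePoint ℂ}
    (hw : chordal a w < 1 / 2) : ∃ s : Set (OnePoint ℂ), IsPreconnected s ∧ ↑a ∈ s ∧ w ∈ s ∧
      ∀ x ∈ s, chordal x a ≤ 8 * chordal a w := by
  obtain ⟨b, rfl, hab⟩ := exists_eq_coe_norm_sub_le ha hw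
  refine ⟨(↑) '' segment ℝ a b, (convex_segment a b).isPreconnected.image _
    OnePoint.continuous_coe.continuousOn, mem_image_of_mem _ (left_mem_segment ℝ a b),
    mem_image_of_mem _ (right_mem_segment ℝ a b), ?_⟩
  rintro _ ⟨t, ht, rfl⟩
  calc chordal t a ≤ 2 * ‖t - a‖ := chordal_coe_le t a
    _ ≤ 2 * ‖a - b‖ := by rw [norm_sub_rev a b]; gcongr; exact norm_sub_le_of_mem_segment ht
    _ ≤ 8 * chordal a b := by linarith

lemma exists_norm_le_one_eq_coe_or_eq_opInv (z : OnePoint ℂ) :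
    ∃ a : ℂ, ‖a‖ ≤ 1 ∧ (z = a ∨ z = opInv a) := by
  induction z using OnePoint.rec with
  | infty => exact ⟨0, by simp, Or.inr opInv_coe_zero.symm⟩
  | coe a =>
    rcases le_or_gt ‖a‖ 1 with ha | ha
    · exact ⟨a, ha, Or.inl rfl⟩
    · have ha0 : a ≠ 0 := norm_pos_iff.1 (one_pos.trans ha)
      refine ⟨a⁻¹, by rw [norm_inv]; exact inv_le_one_of_one_le₀ ha.le, Or.inr ?_⟩
      rw [opInv_coe (inv_ne_zero ha0), inv_inv]

lemma exists_isPreconnected_chordal_le {z w : OnePoint ℂ} (hw : chordal z w < 1 / 2) :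
    ∃ s : Set (OnePoint ℂ), IsPreconnected s ∧ z ∈ s ∧ w ∈ s ∧
      ∀ x ∈ s, chordal x z ≤ 8 * chordal z w := by
  obtain ⟨a, ha, rfl | rfl⟩ := exists_norm_le_one_eq_coe_or_eq_opInv z
  · exact exists_isPreconnected_chordal_le_of_norm_le_one ha hw
  · rw [← opInv_involutive w, chordal_opInv] at hw ⊢
    obtain ⟨s, hs, has, hws, hsa⟩ := exists_isPreconnected_chordal_le_of_norm_le_one ha hw
    refine ⟨opInv '' s, hs.image _ continuous_opInv.continuousOn, mem_image_of_mem _ has,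
      mem_image_of_mem _ hws, ?_⟩
    rintro _ ⟨x, hx, rfl⟩
    rw [chordal_opInv]
    exact hsa x hx

lemma CompactSpace.exists_pos_forall_exists_mem_le {X : Type*} [TopologicalSpace X]
    [CompactSpace X] {U : X → Set X} (hU : ∀ x, U x ∈ 𝓝 x) {δ : X → ℝ} (hδ : ∀ x, 0 < δ x) :
    ∃ δ₀ > 0, ∀ y, ∃ x, y ∈ U x ∧ δ₀ ≤ δ x := by
  obtain ⟨t, ht⟩ := CompactSpace.elim_nhds_subcover U hU
  obtain ⟨δ₀, hδ₀, hle⟩ : ∃ δ₀ > 0, ∀ x ∈ t, δ₀ ≤ δ x := by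
    have : ∀ᶠ η in 𝓝[>] (0 : ℝ), 0 < η ∧ ∀ x ∈ t, η ≤ δ x :=
      (eventually_mem_nhdsWithin (a := 0) (s := Ioi 0)).and <|
        (eventually_all_finset t).2 fun x _ ↦ nhdsWithin_le_nhds (eventually_le_nhds (hδ x))
    exact this.exists
  refine ⟨δ₀, hδ₀, fun y ↦ ?_⟩
  obtain ⟨x, hx, hyx⟩ := mem_iUnion₂.1 (ht.ge (mem_univ y))
  exact ⟨x, hyx, hle x hx⟩

/-- A family `𝒬` of quotient maps of the sphere is equicontinuous
provided that for every `w₀` and every disk `U ∋ w₀` there are `δ(w₀) > 0` and a disk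
`V ∋ w₀` with `cl V ⊆ U` such that `dist_s(q⁻¹(∂U), q⁻¹(V)) > δ(w₀)` for all `q ∈ 𝒬`. -/
theorem quotient_family_equicontinuous
    (𝒬 : Set (OnePoint ℂ → OnePoint ℂ))
    (hq : ∀ q ∈ 𝒬, IsSphQuotientMap q)
    (h : ∀ w₀ : OnePoint ℂ, ∀ U : Set (OnePoint ℂ), IsDisk U → w₀ ∈ U →
      ∃ δ > (0:ℝ), ∃ V : Set (OnePoint ℂ), IsDisk V ∧ w₀ ∈ V ∧ closure V ⊆ U ∧
        ∀ q ∈ 𝒬, ∀ x ∈ q ⁻¹' (frontier U), ∀ y ∈ q ⁻¹' V, chordal x y > δ) :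
    ∀ ε > (0:ℝ), ∃ δ > (0:ℝ), ∀ q ∈ 𝒬, ∀ z w : OnePoint ℂ,
      chordal z w < δ → chordal (q z) (q w) < ε := by
  intro ε hε
  choose U hU hw₀U hUsmall using fun w₀ ↦ exists_isDisk_chordal_lt w₀ hε
  choose δ hδ V hV hw₀V hVU hsep using fun w₀ ↦ h w₀ (U w₀) (hU w₀) (hw₀U w₀)
  obtain ⟨δ₀, hδ₀, hcover⟩ := CompactSpace.exists_pos_forall_exists_mem_le
    (fun w₀ ↦ (hV w₀).1.mem_nhds (hw₀V w₀)) hδ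
  refine ⟨min (1 / 2) (δ₀ / 8), by positivity, fun q hqQ z w hzw ↦ ?_⟩
  obtain ⟨i, hzV, hδ₀i⟩ := hcover (q z)
  have hzU : q z ∈ U i := hVU i (subset_closure hzV)
  refine hUsmall i _ hzU _ (by_contra fun hwU ↦ ?_)
  obtain ⟨s, hs, hzs, hws, hsz⟩ :=
    exists_isPreconnected_chordal_le (hzw.trans_le (min_le_left _ _))
  obtain ⟨_, ⟨x, hxs, rfl⟩, hxU⟩ :=
    (hs.image q (hq q hqQ).1.continuousOn).inter_frontier_nonempty
      ⟨q z, mem_image_of_mem q hzs, hzU⟩ ⟨q w, mem_image_of_mem q hws, hwU⟩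
  have hxz := hsz x hxs
  have := hsep i q hqQ x hxU z hzV
  linarith [min_le_right (1 / 2 : ℝ) (δ₀ / 8)]
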